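/- The canonical graded map gr(𝔄_𝒞) → (gr 𝔄)_𝒞 is an isomorphism of graded rings. -/
import Mathlib


/-!
STATEMENT 16.  Let `𝔄 = ⋃_{n≥0} Λ_n` be a filtered `ℂ`-algebra whose degree-zero
part `Λ_0 = B` is a commutative domain, and let `𝒞 ⊆ B∖{0}` be a multiplicatively
closed set each of whose elements acts locally ad-nilpotently on `𝔄`, so that `𝒞`
is an Ore set in `𝔄`.  The Ore localisation `𝔄' = 𝔄_𝒞` is filtered by
`Λ_{n,𝒞} = B_𝒞 ⊗_B Λ_n`.  Theorem: the canonical graded map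
`gr(𝔄_𝒞) → (gr 𝔄)_𝒞` is an isomorphism of graded rings; i.e. for each `n` there is
a (unique) isomorphism `Λ_{n,𝒞}/Λ_{n-1,𝒞} ≅ B_𝒞 ⊗_B (Λ_n/Λ_{n-1})` sending the
class of `x` with `c·x = a`, `c ∈ 𝒞`, `a ∈ Λ_n`, to `(1/c) ⊗ ā`.
(We realise `B_𝒞 ⊗_B M` as `LocalizedModule 𝒞 M`.)
-/

noncomputable section

/-- `Λ_{n-1}`, with the convention `Λ_{-1} = 0`. -/
def Lpred {B M : Type*} [Semiring B] [AddCommMonoid M] [Module B M]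
    (Λ : ℕ → Submodule B M) : ℕ → Submodule B M
  | 0 => ⊥
  | n + 1 => Λ n

/-- The `n`-th graded piece `Λ_n / Λ_{n-1}` of a filtration. -/
abbrev grPiece {B M : Type*} [Ring B] [AddCommGroup M] [Module B M]
    (Λ : ℕ → Submodule B M) (n : ℕ) :=
  ↥(Λ n) ⧸ (Submodule.comap (Λ n).subtype (Lpred Λ n))

theorem gr_of_localization_iso
    -- the filtered ℂ-algebra 𝔄, with B = Λ 0 a commutative domain acting by
    -- left multiplication through ιB
    (B : Type*) [CommRing B] [IsDomain B] [Algebra ℂ B]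
    (𝔄 : Type*) [Ring 𝔄] [Algebra ℂ 𝔄] [Module B 𝔄]
    (ιB : B →ₐ[ℂ] 𝔄) (hιB : Function.Injective ιB)
    (hsmul : ∀ (b : B) (a : 𝔄), b • a = ιB b * a)
    (Λ : ℕ → Submodule B 𝔄)
    (hmono : Monotone Λ)
    (hone : (1 : 𝔄) ∈ Λ 0)
    (hmul : ∀ m n, ∀ a ∈ Λ m, ∀ b ∈ Λ n, a * b ∈ Λ (m + n))
    (hexh : ∀ a : 𝔄, ∃ n, a ∈ Λ n)
    (hB0 : Set.range ιB = (Λ 0 : Set 𝔄))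
    -- the multiplicative set 𝒞 ⊆ B, acting locally ad-nilpotently on 𝔄
    (𝒞 : Submonoid B) (h𝒞0 : (0 : B) ∉ 𝒞)
    (hnil : ∀ c ∈ 𝒞, ∀ a : 𝔄, ∃ k : ℕ,
      (fun x => ιB c * x - x * ιB c)^[k] a = 0)
    -- the Ore localisation 𝔄' = 𝔄_𝒞, with B_𝒞 acting through ι ∘ ιB
    (𝔄' : Type*) [Ring 𝔄'] [Algebra ℂ 𝔄'] [Module B 𝔄']
    (ι : 𝔄 →ₐ[ℂ] 𝔄')
    (hsmul' : ∀ (b : B) (x : 𝔄'), b • x = ι (ιB b) * x)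
    (hunit : ∀ c ∈ 𝒞, IsUnit (ι (ιB c)))
    (hfrac : ∀ x : 𝔄', ∃ c ∈ 𝒞, ∃ a : 𝔄, ι (ιB c) * x = ι a)
    (hker : ∀ a : 𝔄, ι a = 0 ↔ ∃ c ∈ 𝒞, ιB c * a = 0)
    -- the induced filtration Λ' on 𝔄'
    (Λ' : ℕ → Submodule B 𝔄')
    (hΛ' : ∀ n, Λ' n = Submodule.span B
      {x : 𝔄' | ∃ c ∈ 𝒞, ∃ a ∈ Λ n, ι (ιB c) * x = ι a}) :
    -- conclusion: the canonical map gr(𝔄_𝒞) → (gr 𝔄)_𝒞 is a degreewise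
    -- isomorphism of graded modules, compatible with the ring structures
    ∃ φ : ∀ n : ℕ, grPiece Λ' n ≃ₗ[B] LocalizedModule 𝒞 (grPiece Λ n),
      ∀ (n : ℕ) (c : 𝒞) (x : 𝔄') (hx : x ∈ Λ' n) (a : 𝔄) (ha : a ∈ Λ n),
        ι (ιB (c : B)) * x = ι a →
        φ n (Submodule.Quotient.mk ⟨x, hx⟩) =
          LocalizedModule.mk (Submodule.Quotient.mk ⟨a, ha⟩) c := by
  classical
  have comm : ∀ b c : B, ι (ιB b) * ι (ιB c) = ι (ιB c) * ι (ιB b) := by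
    intro b c
    rw [← map_mul, ← map_mul, ← map_mul, ← map_mul, mul_comm]
  -- characterization of Λ' n
  have hchar : ∀ n (x : 𝔄'), x ∈ Λ' n ↔ ∃ c ∈ 𝒞, ∃ a ∈ Λ n, ι (ιB c) * x = ι a := by
    intro n x
    constructor
    · intro hx
      rw [hΛ' n] at hx
      induction hx using Submodule.span_induction with
      | mem x hx => exact hx
      | zero => exact ⟨1, one_mem _, 0, zero_mem _, by simp⟩
      | add x y _ _ ihx ihy =>
        obtain ⟨c, hc, a, ha, hca⟩ := ihx
        obtain ⟨d, hd, b, hb, hdb⟩ := ihy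
        refine ⟨c * d, mul_mem hc hd, d • a + c • b,
          add_mem (Submodule.smul_mem _ _ ha) (Submodule.smul_mem _ _ hb), ?_⟩
        have l1 : ι (ιB c) * ι (ιB d) * x = ι (ιB d) * ι a := by
          rw [comm, mul_assoc, hca]
        have l2 : ι (ιB c) * ι (ιB d) * y = ι (ιB c) * ι b := by
          rw [mul_assoc, hdb]
        rw [map_mul, map_mul, mul_add, l1, l2, map_add, hsmul, hsmul, map_mul, map_mul]
      | smul b x _ ih =>
        obtain ⟨c, hc, a, ha, hca⟩ := ih
        refine ⟨c, hc, b • a, Submodule.smul_mem _ _ ha, ?_⟩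
        rw [hsmul' b x, hsmul, map_mul, ← mul_assoc, comm, mul_assoc, hca, ← map_mul]
    · intro h; rw [hΛ' n]; exact Submodule.subset_span h
  -- cross lemma: two fraction representations give the same localized class
  have key : ∀ n (c d : 𝒞) (x : 𝔄') (a b : 𝔄) (ha : a ∈ Λ n) (hb : b ∈ Λ n),
      ι (ιB (c : B)) * x = ι a → ι (ιB (d : B)) * x = ι b →
      (LocalizedModule.mk (Submodule.Quotient.mk ⟨a, ha⟩ : grPiece Λ n) c) =
        LocalizedModule.mk (Submodule.Quotient.mk ⟨b, hb⟩) d := by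
    intro n c d x a b ha hb hca hdb
    have h1 : ι (ιB (d : B) * a) = ι (ιB (c : B) * b) := by
      rw [map_mul, map_mul, ← hca, ← hdb, ← mul_assoc, ← mul_assoc, comm]
    have h2 : ι (ιB (d : B) * a - ιB (c : B) * b) = 0 := by rw [map_sub, h1, sub_self]
    obtain ⟨u, hu, hu'⟩ := (hker _).1 h2
    have h3 : (u * (d : B)) • a = (u * (c : B)) • b := by
      rw [hsmul, hsmul, map_mul, map_mul, mul_assoc, mul_assoc]
      rw [mul_sub, sub_eq_zero] at hu'
      exact hu'
    rw [LocalizedModule.mk_eq]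
    refine ⟨⟨u, hu⟩, ?_⟩
    rw [Submonoid.smul_def, Submonoid.smul_def, Submonoid.smul_def, Submonoid.smul_def,
      ← Submodule.Quotient.mk_smul, ← Submodule.Quotient.mk_smul,
      ← Submodule.Quotient.mk_smul, ← Submodule.Quotient.mk_smul]
    congr 1
    ext
    simpa [smul_smul] using h3
  have main : ∀ n, ∃ e : grPiece Λ' n ≃ₗ[B] LocalizedModule 𝒞 (grPiece Λ n),
      ∀ (c : 𝒞) (x : 𝔄') (hx : x ∈ Λ' n) (a : 𝔄) (ha : a ∈ Λ n),
        ι (ιB (c : B)) * x = ι a →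
        e (Submodule.Quotient.mk ⟨x, hx⟩) =
          LocalizedModule.mk (Submodule.Quotient.mk ⟨a, ha⟩) c := by
    intro n
    have sel : ∀ x : Λ' n, ∃ q : 𝒞 × Λ n, ι (ιB (q.1 : B)) * (x : 𝔄') = ι (q.2 : 𝔄) := by
      intro x
      obtain ⟨c, hc, a, ha, h⟩ := (hchar n x).1 x.2
      exact ⟨⟨⟨c, hc⟩, ⟨a, ha⟩⟩, h⟩
    choose p hp using sel
    set F0 : (Λ' n) → LocalizedModule 𝒞 (grPiece Λ n) :=
      fun x => LocalizedModule.mk (Submodule.Quotient.mk (p x).2) (p x).1 with hF0def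
    have hF0spec : ∀ (x : Λ' n) (c : 𝒞) (a : 𝔄) (ha : a ∈ Λ n),
        ι (ιB (c : B)) * (x : 𝔄') = ι a →
        F0 x = LocalizedModule.mk (Submodule.Quotient.mk ⟨a, ha⟩) c := by
      intro x c a ha h
      exact key n (p x).1 c (x : 𝔄') ((p x).2 : 𝔄) a (p x).2.2 ha (hp x) h
    have hadd : ∀ x y : Λ' n, F0 (x + y) = F0 x + F0 y := by
      intro x y
      set c := (p x).1 with hc
      set a := (p x).2 with ha
      set d := (p y).1 with hd
      set b := (p y).2 with hb
      have hca := hp x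
      have hdb := hp y
      have hrel : ι (ιB ((c * d : 𝒞) : B)) * ((x + y : Λ' n) : 𝔄') =
          ι (((d : B) • a + (c : B) • b : Λ n) : 𝔄) := by
        push_cast
        have l1 : ι (ιB (c : B)) * ι (ιB (d : B)) * (x : 𝔄') = ι (ιB (d : B)) * ι (a : 𝔄) := by
          rw [comm, mul_assoc, hca]
        have l2 : ι (ιB (c : B)) * ι (ιB (d : B)) * (y : 𝔄') = ι (ιB (c : B)) * ι (b : 𝔄) := by
          rw [mul_assoc, hdb]
        rw [map_mul, map_mul, mul_add, l1, l2, map_add, hsmul, hsmul, map_mul, map_mul]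
      rw [hF0spec (x + y) (c * d) _ ((d : B) • a + (c : B) • b).2 hrel]
      show _ = LocalizedModule.mk (Submodule.Quotient.mk a) c +
        LocalizedModule.mk (Submodule.Quotient.mk b) d
      rw [LocalizedModule.mk_add_mk]
      congr 1
    have hsm : ∀ (r : B) (x : Λ' n), F0 (r • x) = r • F0 x := by
      intro r x
      set c := (p x).1 with hc
      set a := (p x).2 with ha
      have hca := hp x
      have hrel : ι (ιB (c : B)) * ((r • x : Λ' n) : 𝔄') = ι ((r • a : Λ n) : 𝔄) := by
        push_cast
        rw [hsmul' r, hsmul, map_mul, ← mul_assoc, comm, mul_assoc, hca, ← map_mul]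
      rw [hF0spec (r • x) c _ (r • a).2 hrel]
      show _ = r • LocalizedModule.mk (Submodule.Quotient.mk a) c
      rw [LocalizedModule.smul'_mk, ← Submodule.Quotient.mk_smul]
    set F : (Λ' n) →ₗ[B] LocalizedModule 𝒞 (grPiece Λ n) :=
      { toFun := F0, map_add' := hadd, map_smul' := hsm } with hFdef
    have hvanish : Submodule.comap (Λ' n).subtype (Lpred Λ' n) ≤ LinearMap.ker F := by
      intro x hx
      rw [LinearMap.mem_ker]
      show F0 x = 0
      cases n with
      | zero =>
        have hx0 : (x : 𝔄') = 0 := hx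
        rw [hF0spec x 1 0 (zero_mem _) (by simp [hx0])]
        have : (Submodule.Quotient.mk ⟨(0 : 𝔄), zero_mem _⟩ : grPiece Λ 0) = 0 :=
          (Submodule.Quotient.mk_eq_zero _).2 (by simp [Lpred])
        rw [this, LocalizedModule.zero_mk]
      | succ m =>
        have hx' : (x : 𝔄') ∈ Λ' m := hx
        obtain ⟨c, hc, a, ha, h⟩ := (hchar m _).1 hx'
        rw [hF0spec x ⟨c, hc⟩ a (hmono (Nat.le_succ m) ha) h]
        have hz : (Submodule.Quotient.mk ⟨a, hmono (Nat.le_succ m) ha⟩ :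
            grPiece Λ (m + 1)) = 0 :=
          (Submodule.Quotient.mk_eq_zero _).2 ha
        rw [hz, LocalizedModule.zero_mk]
    set f := Submodule.liftQ _ F hvanish with hfdef
    have hfmk : ∀ (x : Λ' n), f (Submodule.Quotient.mk x) = F0 x := by
      intro x; rw [hfdef, Submodule.liftQ_apply]; rfl
    have hinj : Function.Injective f := by
      rw [← LinearMap.ker_eq_bot, eq_bot_iff]
      intro y hy
      rw [LinearMap.mem_ker] at hy
      obtain ⟨x, rfl⟩ := Submodule.Quotient.mk_surjective _ y
      rw [hfmk] at hy
      rw [Submodule.mem_bot, Submodule.Quotient.mk_eq_zero]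
      set c := (p x).1 with hc
      set a := (p x).2 with ha
      have hca := hp x
      rw [hF0def] at hy
      rw [show (0 : LocalizedModule 𝒞 (grPiece Λ n)) = LocalizedModule.mk 0 1 from
        (LocalizedModule.zero_mk 1).symm, LocalizedModule.mk_eq] at hy
      obtain ⟨u, hu⟩ := hy
      simp only [one_smul, smul_zero] at hu
      have hu2 : (Submodule.Quotient.mk ((u : B) • a) : grPiece Λ n) = 0 := by
        rw [Submodule.Quotient.mk_smul]
        rw [Submonoid.smul_def] at hu
        exact hu
      have hmem : ((u : B) • a : Λ n) ∈
          Submodule.comap (Λ n).subtype (Lpred Λ n) :=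
        (Submodule.Quotient.mk_eq_zero _).1 hu2
      have hmem' : (u : B) • (a : 𝔄) ∈ Lpred Λ n := hmem
      have hrel : ι (ιB ((u : B) * (c : B))) * (x : 𝔄') = ι ((u : B) • (a : 𝔄)) := by
        rw [map_mul, map_mul, mul_assoc, hca, ← map_mul, hsmul]
      cases n with
      | zero =>
        have hz : (u : B) • (a : 𝔄) = 0 := hmem'
        rw [hz, map_zero] at hrel
        have hun : IsUnit (ι (ιB ((u : B) * (c : B)))) :=
          hunit _ (mul_mem u.2 c.2)
        have hx0 : (x : 𝔄') = 0 := hun.mul_left_cancel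
          (show ι (ιB ((u : B) * (c : B))) * (x : 𝔄') =
            ι (ιB ((u : B) * (c : B))) * 0 by rw [hrel, mul_zero])
        exact Submodule.mem_comap.2 (by simp [Lpred, hx0])
      | succ m =>
        exact Submodule.mem_comap.2
          ((hchar m (x : 𝔄')).2 ⟨(u : B) * (c : B), mul_mem u.2 c.2,
            (u : B) • (a : 𝔄), hmem', hrel⟩)
    have hsurj : Function.Surjective f := by
      intro z
      induction z using LocalizedModule.induction_on with
      | _ m s =>
        obtain ⟨⟨a, ha⟩, rfl⟩ := Submodule.Quotient.mk_surjective _ m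
        have hu := hunit (s : B) s.2
        have hrel : ι (ιB (s : B)) * ((↑hu.unit⁻¹ : 𝔄') * ι a) = ι a := by
          have h2 := hu.unit.mul_inv_cancel_left (ι a)
          rwa [hu.unit_spec] at h2
        have hx : (↑hu.unit⁻¹ : 𝔄') * ι a ∈ Λ' n :=
          (hchar n _).2 ⟨s, s.2, a, ha, hrel⟩
        exact ⟨Submodule.Quotient.mk ⟨_, hx⟩, by
          rw [hfmk]; exact hF0spec ⟨_, hx⟩ s a ha hrel⟩
    refine ⟨LinearEquiv.ofBijective f ⟨hinj, hsurj⟩, ?_⟩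
    intro c x hx a ha h
    show f (Submodule.Quotient.mk ⟨x, hx⟩) = _
    rw [hfmk]
    exact hF0spec ⟨x, hx⟩ c a ha h
  choose φ hφ using main
  exact ⟨φ, fun n => hφ n⟩


end
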